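/- arXiv:0905.2621 — 2 statements merged into one kernel-verified Lean document; each statement's English description precedes it below -/
import Mathlib

section
/- Let H be a triangulated category and B, C ⊆ H full triangulated subcategories such that Hom_H(B,C) = 0 for all objects B ∈ B and C ∈ C. Then for any B ∈ B and X ∈ H, the natural map Hom_H(B, X) → Hom_{H/C}(B, X) is an isomorphism, and for any C ∈ C and X ∈ H, the natural map Hom_H(X, C) → Hom_{H/B}(X, C) is an isomorphism. In particular, the induced functors B → H/C and C → H/B are fully faithful. -/
/-!
Orthogonality makes each object of `B` colocal, and each object of `C` local, for the morphisms
whose cone lies in the other subcategory: in the long exact `Hom` sequences of the defining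
triangle the terms involving the cone vanish. For a localization `L` at `W` and a `W`-colocal
`X`, the functor `Hom(X, -)` inverts `W`, so `L` is injective on maps out of `X`; and every
zigzag out of `L X` straightens to a map of `H`, since each formal inverse of some `w` is
absorbed by factoring through `w`. Local objects are the dual case.
-/

open CategoryTheory Limits Pretriangulated

namespace CategoryTheory.Triangulated

variable (C : Type*) [Category C] [HasZeroObject C] [HasShift C ℤ] [Preadditive C]
  [∀ n : ℤ, (shiftFunctor C n).Additive] [Pretriangulated C]

structure Subcategory where
  P : C → Prop
  zero' : ∃ (Z : C) (_ : IsZero Z), P Z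
  shift (X : C) (n : ℤ) : P X → P (X⟦n⟧)
  ext₂' (T : Triangle C) (_ : T ∈ distTriang C) : P T.obj₁ → P T.obj₃ →
    ObjectProperty.isoClosure P T.obj₂

variable {C}

def Subcategory.W (S : Subcategory C) : MorphismProperty C := fun X Y f =>
  ∃ (Z : C) (g : Y ⟶ Z) (h : Z ⟶ X⟦(1 : ℤ)⟧) (_ : Triangle.mk f g h ∈ distTriang C), S.P Z

end CategoryTheory.Triangulated

open Opposite

lemma CategoryTheory.MorphismProperty.isLocal.isColocal_op {C : Type*} [Category C]
    {W : MorphismProperty C} {Y : C} (hY : W.isLocal Y) : W.op.isColocal (Opposite.op Y) :=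
  fun _ _ w hw => (opEquiv _ _).symm.bijective.comp ((hY w.unop hw).comp (opEquiv _ _).bijective)

namespace CategoryTheory.Localization

variable {C D : Type*} [Category C] [Category D] (L : C ⥤ D) (W : MorphismProperty C)
  [L.IsLocalization W]

lemma map_bijective_of_isColocal {X : C} (hX : W.isColocal X) (Z : C) :
    Function.Bijective (L.map : (X ⟶ Z) → _) := by
  refine ⟨fun f g h => ?_, fun φ => ?_⟩
  · have hinv : W.IsInvertedBy (coyoneda.obj (op X)) := fun _ _ w hw =>
      (isIso_iff_bijective _).2 (hX w hw)
    simpa using ConcreteCategory.congr_hom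
      (((areEqualizedByLocalization_iff L W f g).2 h).map_eq_of_isInvertedBy _ hinv) (𝟙 X)
  · suffices ∀ φ : StructuredArrow (L.obj X) L, ∃ f : X ⟶ φ.right, L.map f = φ.hom from
      this (StructuredArrow.mk φ)
    intro φ
    induction φ using induction_structuredArrow L W with
    | hP₀ => exact ⟨𝟙 X, L.map_id X⟩
    | hP₁ f φ hφ =>
      obtain ⟨g, hg⟩ := hφ
      exact ⟨g ≫ f, by simp [hg]⟩
    | hP₂ w hw φ hφ =>
      obtain ⟨g, hg⟩ := hφ
      obtain ⟨h, rfl⟩ := (hX w hw).2 g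
      simp only [StructuredArrow.mk_hom_eq_self] at hg ⊢
      exact ⟨h, by
        rw [← hg, L.map_comp, Category.assoc, isoOfHom_hom_inv_id, Category.comp_id]⟩

lemma map_bijective_of_isLocal {Y : C} (hY : W.isLocal Y) (Z : C) :
    Function.Bijective (L.map : (Z ⟶ Y) → _) :=
  (opEquiv _ _).bijective.comp
    ((map_bijective_of_isColocal L.op W.op hY.isColocal_op (op Z)).comp
      (opEquiv _ _).symm.bijective)

end CategoryTheory.Localization

namespace CategoryTheory.Triangulated.Subcategory

variable {H : Type*} [Category H] [HasZeroObject H] [HasShift H ℤ] [Preadditive H]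
  [∀ n : ℤ, (shiftFunctor H n).Additive] [Pretriangulated H] (S : Subcategory H)

lemma W_iff' {Y Z : H} (g : Y ⟶ Z) :
    S.W g ↔ ∃ (X : H) (f : X ⟶ Y) (h : Z ⟶ X⟦(1 : ℤ)⟧)
      (_ : Triangle.mk f g h ∈ distTriang H), S.P X := by
  constructor
  · rintro ⟨Z', u, v, hT, hZ'⟩
    exact ⟨_, _, _, inv_rot_of_distTriang _ hT, S.shift _ _ hZ'⟩
  · rintro ⟨X, f, h, hT, hX⟩
    exact ⟨_, _, _, rot_of_distTriang _ hT, S.shift _ _ hX⟩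

lemma leftOrthogonal_le_isColocal_W : ObjectProperty.leftOrthogonal S.P ≤ S.W.isColocal := by
  intro X hX A A' w hw
  refine ⟨(injective_iff_map_eq_zero (Preadditive.rightComp X w)).2 fun f hf => ?_, fun f => ?_⟩
  · obtain ⟨K, u, v, hT, hK⟩ := (S.W_iff' w).1 hw
    obtain ⟨g, rfl⟩ := Triangle.coyoneda_exact₂ _ hT f hf
    rw [hX g hK]; exact zero_comp
  · obtain ⟨K, u, v, hT, hK⟩ := hw
    obtain ⟨g, rfl⟩ := Triangle.coyoneda_exact₂ _ hT f (hX _ hK)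
    exact ⟨g, rfl⟩

lemma rightOrthogonal_le_isLocal_W : ObjectProperty.rightOrthogonal S.P ≤ S.W.isLocal := by
  intro Y hY A A' w hw
  refine ⟨(injective_iff_map_eq_zero (Preadditive.leftComp Y w)).2 fun f hf => ?_, fun f => ?_⟩
  · obtain ⟨K, u, v, hT, hK⟩ := hw
    obtain ⟨g, rfl⟩ := Triangle.yoneda_exact₂ _ hT f hf
    rw [hY g hK]; exact comp_zero
  · obtain ⟨K, u, v, hT, hK⟩ := (S.W_iff' w).1 hw
    obtain ⟨g, rfl⟩ := Triangle.yoneda_exact₂ _ hT f (hY _ hK)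
    exact ⟨g, rfl⟩

end CategoryTheory.Triangulated.Subcategory

/-- Let `H` be a (pre)triangulated category and `B`, `C` full
triangulated subcategories with `Hom_H(B, C) = 0` for all `B ∈ B`, `C ∈ C`.  Then for
`B ∈ B` and any `X`, the map `Hom_H(B, X) → Hom_{H/C}(B, X)` induced by the Verdier
localization functor is bijective; dually, for `C ∈ C` and any `X`, the map
`Hom_H(X, C) → Hom_{H/B}(X, C)` is bijective.  (In particular, the induced functors
`B → H/C` and `C → H/B` are fully faithful.) -/
theorem verdier_quotient_hom_iso
    {H : Type*} [Category H] [HasZeroObject H] [HasShift H ℤ] [Preadditive H]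
    [∀ n : ℤ, (shiftFunctor H n).Additive] [Pretriangulated H]
    (B C : Triangulated.Subcategory H)
    (horth : ∀ (X Y : H), B.P X → C.P Y → ∀ f : X ⟶ Y, f = 0) :
    (∀ (X Z : H), B.P X →
      Function.Bijective (fun f : X ⟶ Z => C.W.Q.map f)) ∧
    (∀ (Z Y : H), C.P Y →
      Function.Bijective (fun f : Z ⟶ Y => B.W.Q.map f)) := by
  refine ⟨fun X Z hX => ?_, fun Z Y hY => ?_⟩
  · have hX' : C.W.isColocal X :=
      C.leftOrthogonal_le_isColocal_W X fun _ f hY => horth X _ hX hY f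
    exact Localization.map_bijective_of_isColocal C.W.Q C.W hX' Z
  · have hY' : B.W.isLocal Y :=
      B.rightOrthogonal_le_isLocal_W Y fun _ f hX => horth _ Y hX hY f
    exact Localization.map_bijective_of_isLocal B.W.Q B.W hY' Z
end

section
/- Let C be a graded coalgebra over a field k, N a graded right C-comodule, M a graded left C-comodule, and V a graded k-vector space. Endow Hom_k(N,V) with its natural graded left C-contramodule structure induced by the right coaction of C on N. Then there is a natural isomorphism of graded vector spaces Hom_k(N □_C M, V) ≅ Cohom_C(M, Hom_k(N,V)). -/
/-!
Over a field `Hom_k(-, V)` is exact, so it turns `N □_C M = ker D`, where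
`D : N ⊗ M → N ⊗ (C ⊗ M)` is the difference of the two coaction maps, into the cokernel of
`Hom_k(D, V)`; under `Hom_k(N ⊗ X, V) ≅ Hom_k(X, Hom_k(N, V))` the map `Hom_k(D, V)` is, up to
sign, the difference of the two maps whose cokernel is `Cohom_C(M, Hom_k(N, V))`.

For the gradings: `D` preserves total degree, and the total-degree pieces of `N ⊗ (C ⊗ M)` are
independent (tensor products of the degree projections separate them), so `N □_C M` is a graded
subspace of `N ⊗ M`. A homogeneous functional on it extends to some functional on `N ⊗ M`, and
replacing that extension by its homogeneous component of the same degree does not change it on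
`N □_C M`.
-/

open TensorProduct

section

variable {k : Type} [Field k]
  {C : Type} [AddCommGroup C] [Module k C] [Coalgebra k C]
  {N : Type} [AddCommGroup N] [Module k N]
  {M : Type} [AddCommGroup M] [Module k M]
  {V : Type} [AddCommGroup V] [Module k V]

/-- The cotensor product `N □_C M`: the kernel (equalizer) of the two natural maps
`N ⊗ M ⇉ N ⊗ (C ⊗ M)` induced by the right coaction on `N` and the left coaction
on `M`. -/
noncomputable def cotensor (ρN : N →ₗ[k] N ⊗[k] C) (ρM : M →ₗ[k] C ⊗[k] M) :
    Submodule k (N ⊗[k] M) :=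
  LinearMap.ker
    (((TensorProduct.assoc k N C M).toLinearMap.comp
        (TensorProduct.map ρN LinearMap.id))
      - TensorProduct.map LinearMap.id ρM)

/-- The contraaction `Hom_k(C, Hom_k(N, V)) → Hom_k(N, V)` on `Hom_k(N, V)` induced
by the right coaction on `N`: `π(g) = (lift g.flip) ∘ ρ_N`. -/
noncomputable def homContraaction (ρN : N →ₗ[k] N ⊗[k] C) :
    (C →ₗ[k] (N →ₗ[k] V)) →ₗ[k] (N →ₗ[k] V) :=
  (LinearMap.lcomp k V ρN).comp
    ((TensorProduct.lift.equiv (RingHom.id k) N C V).toLinearMap.comp LinearMap.lflip.toLinearMap)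

/-- The difference of the two maps `Hom_k(C ⊗ M, P) ⇉ Hom_k(M, P)` (for
`P = Hom_k(N, V)`) whose cokernel is `Cohom_C(M, Hom_k(N, V))`: one is induced by
the coaction on `M`, the other by the contraaction on `Hom_k(N, V)`. -/
noncomputable def cohomRelations (ρN : N →ₗ[k] N ⊗[k] C) (ρM : M →ₗ[k] C ⊗[k] M) :
    (C ⊗[k] M →ₗ[k] (N →ₗ[k] V)) →ₗ[k] (M →ₗ[k] (N →ₗ[k] V)) :=
  LinearMap.lcomp k (N →ₗ[k] V) ρM
    - ((LinearMap.llcomp k M (C →ₗ[k] (N →ₗ[k] V)) (N →ₗ[k] V)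
          (homContraaction (V := V) ρN)).comp
        (LinearMap.lflip.comp (TensorProduct.lcurry (RingHom.id k) C M (N →ₗ[k] V))))

end

open DirectSum

section GradedProj

variable {R ι W : Type*} [CommRing R] [AddCommGroup W] [Module R W] [DecidableEq ι]
  (𝒲 : ι → Submodule R W) [Decomposition 𝒲]

noncomputable def gradedProj (i : ι) : W →ₗ[R] W :=
  (𝒲 i).subtype ∘ₗ component R ι (fun i => 𝒲 i) i ∘ₗ (decomposeLinearEquiv 𝒲).toLinearMap

theorem gradedProj_apply (i : ι) (x : W) : gradedProj 𝒲 i x = decompose 𝒲 x i := rfl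

theorem gradedProj_mem (i : ι) (x : W) : gradedProj 𝒲 i x ∈ 𝒲 i := (decompose 𝒲 x i).2

theorem gradedProj_of_mem {i : ι} {x : W} (hx : x ∈ 𝒲 i) : gradedProj 𝒲 i x = x :=
  decompose_of_mem_same 𝒲 hx

theorem gradedProj_of_mem_of_ne {i j : ι} {x : W} (hx : x ∈ 𝒲 j) (h : j ≠ i) :
    gradedProj 𝒲 i x = 0 :=
  decompose_of_mem_ne 𝒲 hx h

end GradedProj

section Resolution

variable {R W : Type*} [CommRing R] [AddCommGroup W] [Module R W]

def IsResolutionOfId {κ : Type*} (Q : κ → W →ₗ[R] W) : Prop :=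
  ∀ x, ∃ s : Finset κ, (∀ t ∉ s, Q t x = 0) ∧ ∑ t ∈ s, Q t x = x

theorem isResolutionOfId_gradedProj {ι : Type*} [DecidableEq ι] (𝒲 : ι → Submodule R W)
    [Decomposition 𝒲] : IsResolutionOfId (gradedProj 𝒲) := by
  classical
  intro x
  refine ⟨(decompose 𝒲 x).support, fun i hi => ?_, sum_support_decompose 𝒲 x⟩
  rw [gradedProj_apply, DFinsupp.notMem_support_iff.mp hi, ZeroMemClass.coe_zero]

theorem IsResolutionOfId.tensorMap {W' κ κ' : Type*} [AddCommGroup W'] [Module R W']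
    {P : κ → W →ₗ[R] W} {Q : κ' → W' →ₗ[R] W'} (hP : IsResolutionOfId P)
    (hQ : IsResolutionOfId Q) :
    IsResolutionOfId fun t : κ × κ' => TensorProduct.map (P t.1) (Q t.2) := by
  classical
  intro z
  induction z using TensorProduct.induction_on with
  | zero => exact ⟨∅, by simp, by simp⟩
  | tmul x y =>
    obtain ⟨s, hs, hx⟩ := hP x
    obtain ⟨s', hs', hy⟩ := hQ y
    refine ⟨s ×ˢ s', fun t ht => ?_, ?_⟩
    · rcases not_and_or.mp (Finset.mem_product.not.mp ht) with h | h
      · rw [map_tmul, hs _ h, zero_tmul]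
      · rw [map_tmul, hs' _ h, tmul_zero]
    · simp_rw [map_tmul, Finset.sum_product, ← tmul_sum, ← sum_tmul, hx, hy]
  | add z z' ih ih' =>
    obtain ⟨s, hs, hz⟩ := ih
    obtain ⟨s', hs', hz'⟩ := ih'
    refine ⟨s ∪ s', fun t ht => ?_, ?_⟩
    · rw [Finset.mem_union, not_or] at ht
      rw [map_add, hs t ht.1, hs' t ht.2, add_zero]
    · simp_rw [map_add, Finset.sum_add_distrib]
      rw [← Finset.sum_subset Finset.subset_union_left fun t _ ht => hs t ht,
        ← Finset.sum_subset Finset.subset_union_right fun t _ ht => hs' t ht, hz, hz']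

theorem IsResolutionOfId.iSupIndep {ι κ : Type*} {Q : κ → W →ₗ[R] W} (hQ : IsResolutionOfId Q)
    (G : ι → Submodule R W) (deg : κ → ι) (hker : ∀ t i, deg t ≠ i → G i ≤ LinearMap.ker (Q t)) :
    iSupIndep G := by
  intro i
  rw [Submodule.disjoint_def]
  intro x hx hsup
  have hQx : ∀ t, Q t x = 0 := by
    intro t
    by_cases h : deg t = i
    · exact iSup₂_le (fun j hj => hker t j (h ▸ Ne.symm hj)) hsup
    · exact hker t i h hx
  obtain ⟨s, -, hs⟩ := hQ x
  rw [← hs]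
  exact Finset.sum_eq_zero fun t _ => hQx t

end Resolution

section TensorGrading

variable {R ι A B : Type*} [CommRing R] [AddCommGroup ι]
  [AddCommGroup A] [Module R A] [AddCommGroup B] [Module R B]

def tensorGrading (𝒜 : ι → Submodule R A) (ℬ : ι → Submodule R B) (n : ι) :
    Submodule R (A ⊗[R] B) :=
  Submodule.span R {z | ∃ a : ι, ∃ x ∈ 𝒜 a, ∃ y ∈ ℬ (n - a), z = x ⊗ₜ[R] y}

variable {𝒜 : ι → Submodule R A} {ℬ : ι → Submodule R B}

theorem tmul_mem_tensorGrading {i j : ι} {x : A} {y : B} (hx : x ∈ 𝒜 i) (hy : y ∈ ℬ j) :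
    x ⊗ₜ[R] y ∈ tensorGrading 𝒜 ℬ (i + j) :=
  Submodule.subset_span ⟨i, x, hx, y, by rwa [add_sub_cancel_left], rfl⟩

theorem sum_tmul_mem_tensorGrading {κ : Type*} {s : Finset κ} {x : κ → A} {y : κ → B}
    {d : κ → ι} {n : ι} (h : ∀ t ∈ s, x t ∈ 𝒜 (d t) ∧ y t ∈ ℬ (n - d t)) :
    ∑ t ∈ s, x t ⊗ₜ[R] y t ∈ tensorGrading 𝒜 ℬ n :=
  Submodule.sum_mem _ fun t ht => Submodule.subset_span ⟨d t, x t, (h t ht).1, y t, (h t ht).2, rfl⟩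

theorem tensorGrading_le_comap_map {A' B' : Type*} [AddCommGroup A'] [Module R A']
    [AddCommGroup B'] [Module R B'] {𝒜' : ι → Submodule R A'} {ℬ' : ι → Submodule R B'}
    {f : A →ₗ[R] A'} {g : B →ₗ[R] B'} (hf : ∀ i, 𝒜 i ≤ (𝒜' i).comap f)
    (hg : ∀ i, ℬ i ≤ (ℬ' i).comap g) (n : ι) :
    tensorGrading 𝒜 ℬ n ≤ (tensorGrading 𝒜' ℬ' n).comap (TensorProduct.map f g) := by
  refine Submodule.span_le.mpr ?_
  rintro _ ⟨a, x, hx, y, hy, rfl⟩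
  exact Submodule.subset_span ⟨a, f x, hf a hx, g y, hg _ hy, rfl⟩

theorem tensorGrading_assoc_le {C : Type*} [AddCommGroup C] [Module R C]
    {𝒞 : ι → Submodule R C} (n : ι) :
    tensorGrading (tensorGrading 𝒜 ℬ) 𝒞 n ≤
      (tensorGrading 𝒜 (tensorGrading ℬ 𝒞) n).comap (TensorProduct.assoc R A B C).toLinearMap := by
  refine Submodule.span_le.mpr ?_
  rintro _ ⟨a, z, hz, w, hw, rfl⟩
  suffices tensorGrading 𝒜 ℬ a ≤ (tensorGrading 𝒜 (tensorGrading ℬ 𝒞) n).comap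
      ((TensorProduct.assoc R A B C).toLinearMap ∘ₗ (TensorProduct.mk R _ C).flip w) from this hz
  refine Submodule.span_le.mpr ?_
  rintro _ ⟨b, x, hx, y, hy, rfl⟩
  refine Submodule.subset_span ⟨b, x, hx, y ⊗ₜ[R] w, ?_, rfl⟩
  simpa [sub_sub_sub_cancel_right] using tmul_mem_tensorGrading (ℬ := 𝒞) hy hw

variable [DecidableEq ι] (𝒜 ℬ) [Decomposition 𝒜] [Decomposition ℬ]

theorem iSup_tensorGrading : ⨆ n, tensorGrading 𝒜 ℬ n = ⊤ := by
  refine eq_top_iff.mpr (TensorProduct.span_tmul_eq_top R A B ▸ Submodule.span_le.mpr ?_)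
  rintro _ ⟨x, y, rfl⟩
  induction x using Decomposition.inductionOn 𝒜 with
  | zero => simp
  | homogeneous x =>
    induction y using Decomposition.inductionOn ℬ with
    | zero => simp
    | homogeneous y => exact Submodule.mem_iSup_of_mem _ (tmul_mem_tensorGrading x.2 y.2)
    | add y y' h h' => rw [tmul_add]; exact add_mem h h'
  | add x x' h h' => rw [add_tmul]; exact add_mem h h'

theorem iSupIndep_tensorGrading : iSupIndep (tensorGrading 𝒜 ℬ) := by
  refine ((isResolutionOfId_gradedProj 𝒜).tensorMap (isResolutionOfId_gradedProj ℬ)).iSupIndep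
    _ (fun t => t.1 + t.2) fun t n hne => Submodule.span_le.mpr ?_
  rintro _ ⟨a, x, hx, y, hy, rfl⟩
  simp only [SetLike.mem_coe, LinearMap.mem_ker, map_tmul]
  by_cases ha : a = t.1
  · rw [gradedProj_of_mem_of_ne ℬ hy (by rintro h; exact hne (by rw [← h, ha, add_sub_cancel])),
      tmul_zero]
  · rw [gradedProj_of_mem_of_ne 𝒜 hx ha, zero_tmul]

theorem isInternal_tensorGrading : IsInternal (tensorGrading 𝒜 ℬ) :=
  (isInternal_submodule_iff_iSupIndep_and_iSup_eq_top _).mpr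
    ⟨iSupIndep_tensorGrading 𝒜 ℬ, iSup_tensorGrading 𝒜 ℬ⟩

noncomputable instance : Decomposition (tensorGrading 𝒜 ℬ) :=
  (isInternal_tensorGrading 𝒜 ℬ).chooseDecomposition

end TensorGrading

section HomogeneousKernel

variable {R ι X Y : Type*} [CommRing R] [DecidableEq ι]
  [AddCommGroup X] [Module R X] [AddCommGroup Y] [Module R Y]
  (𝒳 : ι → Submodule R X) [Decomposition 𝒳]

theorem isHomogeneous_ker {𝒴 : ι → Submodule R Y} (h𝒴 : iSupIndep 𝒴) {D : X →ₗ[R] Y}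
    (hD : ∀ i, 𝒳 i ≤ (𝒴 i).comap D) : SetLike.IsHomogeneous 𝒳 (LinearMap.ker D) := by
  classical
  intro i z hz
  have hz' : ∑ j ∈ insert i (decompose 𝒳 z).support, (decompose 𝒳 z j : X) = z :=
    (Finset.sum_subset (Finset.subset_insert _ _) fun j _ hj => by
      rw [DFinsupp.notMem_support_iff.mp hj, ZeroMemClass.coe_zero]).symm.trans
      (sum_support_decompose 𝒳 z)
  have hsum : ∑ j ∈ insert i (decompose 𝒳 z).support, D (decompose 𝒳 z j) = 0 := by
    rwa [← map_sum, hz']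
  exact (iSupIndep_iff_finsetSum_eq_zero_imp_eq_zero 𝒴).mp h𝒴 _ _
    (fun j _ => hD j (decompose 𝒳 z j).2) hsum i (Finset.mem_insert_self _ _)

end HomogeneousKernel

section HomogeneousPart

variable {R ι X V : Type*} [CommRing R] [DecidableEq ι] [Add ι]
  [AddCommGroup X] [Module R X] [AddCommGroup V] [Module R V]
  (𝒳 : ι → Submodule R X) [Decomposition 𝒳] (𝒱 : ι → Submodule R V) [Decomposition 𝒱]

noncomputable def homogeneousPart (p : ι) (f : X →ₗ[R] V) : X →ₗ[R] V :=
  toModule R ι V (fun i => gradedProj 𝒱 (i + p) ∘ₗ f ∘ₗ (𝒳 i).subtype) ∘ₗ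
    (decomposeLinearEquiv 𝒳).toLinearMap

variable {𝒳 𝒱} {p : ι} {f : X →ₗ[R] V}

theorem homogeneousPart_apply_of_mem {i : ι} {x : X} (hx : x ∈ 𝒳 i) :
    homogeneousPart 𝒳 𝒱 p f x = gradedProj 𝒱 (i + p) (f x) := by
  rw [homogeneousPart, LinearMap.comp_apply, LinearEquiv.coe_coe, decomposeLinearEquiv_apply,
    decompose_of_mem 𝒳 hx, ← lof_eq_of R, toModule_lof]
  rfl

theorem homogeneousPart_apply_of_isHomogeneous {K : Submodule R X}
    (hK : SetLike.IsHomogeneous 𝒳 K) (hf : ∀ i, ∀ x ∈ K, x ∈ 𝒳 i → f x ∈ 𝒱 (i + p))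
    {x : X} (hx : x ∈ K) : homogeneousPart 𝒳 𝒱 p f x = f x := by
  classical
  rw [← sum_support_decompose 𝒳 x, map_sum, map_sum]
  refine Finset.sum_congr rfl fun i _ => ?_
  rw [homogeneousPart_apply_of_mem (decompose 𝒳 x i).2,
    gradedProj_of_mem 𝒱 (hf i _ (hK i hx) (decompose 𝒳 x i).2)]

end HomogeneousPart

theorem LinearMap.exists_comp_eq_iff_ker_le {K A B V : Type*} [Field K] [AddCommGroup A]
    [Module K A] [AddCommGroup B] [Module K B] [AddCommGroup V] [Module K V]
    (D : A →ₗ[K] B) (f : A →ₗ[K] V) :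
    (∃ ψ : B →ₗ[K] V, ψ ∘ₗ D = f) ↔ LinearMap.ker D ≤ LinearMap.ker f := by
  refine ⟨fun ⟨ψ, hψ⟩ => hψ ▸ LinearMap.ker_le_ker_comp D ψ, fun h => ?_⟩
  obtain ⟨ψ, hψ⟩ := LinearMap.exists_extend ((LinearMap.ker D).liftQ f h ∘ₗ
    D.quotKerEquivRange.symm.toLinearMap)
  refine ⟨ψ, LinearMap.ext fun x => ?_⟩
  have := LinearMap.congr_fun hψ ⟨D x, LinearMap.mem_range_self D x⟩
  rwa [LinearMap.comp_apply, LinearMap.comp_apply, LinearEquiv.coe_coe,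
    LinearMap.quotKerEquivRange_symm_apply_image, Submodule.mkQ_apply,
    Submodule.liftQ_apply] at this

section Cotensor

variable {R ι C N M : Type*} [CommRing R] [AddCommGroup ι]
  [AddCommGroup C] [Module R C] [AddCommGroup N] [Module R N] [AddCommGroup M] [Module R M]

noncomputable def cotensorDiff (ρN : N →ₗ[R] N ⊗[R] C) (ρM : M →ₗ[R] C ⊗[R] M) :
    N ⊗[R] M →ₗ[R] N ⊗[R] (C ⊗[R] M) :=
  (TensorProduct.assoc R N C M).toLinearMap ∘ₗ TensorProduct.map ρN LinearMap.id -
    TensorProduct.map LinearMap.id ρM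

theorem tensorGrading_le_comap_cotensorDiff {𝒞 : ι → Submodule R C} {𝒩 : ι → Submodule R N}
    {ℳ : ι → Submodule R M} {ρN : N →ₗ[R] N ⊗[R] C} {ρM : M →ₗ[R] C ⊗[R] M}
    (hρN : ∀ n, 𝒩 n ≤ (tensorGrading 𝒩 𝒞 n).comap ρN)
    (hρM : ∀ n, ℳ n ≤ (tensorGrading 𝒞 ℳ n).comap ρM) (n : ι) :
    tensorGrading 𝒩 ℳ n ≤
      (tensorGrading 𝒩 (tensorGrading 𝒞 ℳ) n).comap (cotensorDiff ρN ρM) := by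
  intro z hz
  rw [Submodule.mem_comap, cotensorDiff, LinearMap.sub_apply]
  exact sub_mem
    (tensorGrading_assoc_le n
      (tensorGrading_le_comap_map hρN (fun i => (Submodule.comap_id (ℳ i)).ge) n hz))
    (tensorGrading_le_comap_map (fun i => (Submodule.comap_id (𝒩 i)).ge) hρM n hz)

end Cotensor

section

variable {k C N M V : Type} [Field k] [AddCommGroup C] [Module k C] [AddCommGroup N] [Module k N]
  [AddCommGroup M] [Module k M] [AddCommGroup V] [Module k V]
  (ρN : N →ₗ[k] N ⊗[k] C) (ρM : M →ₗ[k] C ⊗[k] M)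

theorem lift_flip_cohomRelations (g : C ⊗[k] M →ₗ[k] (N →ₗ[k] V)) :
    lift (cohomRelations ρN ρM g).flip = -(lift g.flip ∘ₗ cotensorDiff ρN ρM) := by
  refine TensorProduct.ext' fun x y => ?_
  simp only [cohomRelations, homContraaction, cotensorDiff, LinearMap.sub_apply,
    LinearMap.comp_apply, lift.tmul, LinearMap.flip_apply, LinearMap.lcomp_apply,
    LinearMap.llcomp_apply, LinearMap.neg_apply, map_tmul, LinearMap.id_apply,
    LinearEquiv.coe_coe, LinearMap.lflip_apply, map_sub, neg_sub]
  congr 1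
  induction ρN x using TensorProduct.induction_on with
  | zero => simp
  | tmul x₀ c => rfl
  | add w w' h h' => rw [map_add, h, h', add_tmul, map_add, map_add]

theorem mem_range_cohomRelations_iff (h : M →ₗ[k] N →ₗ[k] V) :
    h ∈ LinearMap.range (cohomRelations ρN ρM) ↔
      ∃ ψ : N ⊗[k] (C ⊗[k] M) →ₗ[k] V, ψ ∘ₗ cotensorDiff ρN ρM = lift h.flip := by
  constructor
  · rintro ⟨g, rfl⟩
    exact ⟨-lift g.flip, by rw [lift_flip_cohomRelations, LinearMap.neg_comp]⟩
  · rintro ⟨ψ, hψ⟩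
    have hneg : lift (-(curry ψ).flip).flip = -ψ := TensorProduct.ext' fun _ _ => rfl
    refine ⟨-(curry ψ).flip, LinearMap.ext₂ fun y x => ?_⟩
    simpa [hneg, hψ] using
      LinearMap.congr_fun (lift_flip_cohomRelations ρN ρM (-(curry ψ).flip)) (x ⊗ₜ y)

theorem lift_flip_comp_subtype_cotensor_eq_zero_iff (h : M →ₗ[k] N →ₗ[k] V) :
    lift h.flip ∘ₗ (cotensor ρN ρM).subtype = 0 ↔ h ∈ LinearMap.range (cohomRelations ρN ρM) := by
  rw [← LinearMap.le_ker_iff_comp_subtype_eq_zero, mem_range_cohomRelations_iff]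
  exact (LinearMap.exists_comp_eq_iff_ker_le _ _).symm

end

theorem lift_flip_mem_tensorGrading {R ι N M V : Type*} [CommRing R] [AddCommGroup ι]
    [AddCommGroup N] [Module R N] [AddCommGroup M] [Module R M] [AddCommGroup V] [Module R V]
    {𝒩 : ι → Submodule R N} {ℳ : ι → Submodule R M} {𝒱 : ι → Submodule R V}
    {h : M →ₗ[R] N →ₗ[R] V} {p : ι}
    (hh : ∀ m j y x, y ∈ ℳ m → x ∈ 𝒩 j → h y x ∈ 𝒱 (j + (m + p)))
    {n : ι} {z : N ⊗[R] M} (hz : z ∈ tensorGrading 𝒩 ℳ n) : lift h.flip z ∈ 𝒱 (n + p) := by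
  suffices tensorGrading 𝒩 ℳ n ≤ (𝒱 (n + p)).comap (lift h.flip) from this hz
  refine Submodule.span_le.mpr ?_
  rintro _ ⟨a, x, hx, y, hy, rfl⟩
  simpa [← add_assoc] using hh (n - a) a y x hy hx

theorem exists_homogeneous_lift_flip_comp_subtype_eq {k ι N M V : Type*} [Field k]
    [AddCommGroup ι] [DecidableEq ι]
    [AddCommGroup N] [Module k N] [AddCommGroup M] [Module k M] [AddCommGroup V] [Module k V]
    {𝒩 : ι → Submodule k N} {ℳ : ι → Submodule k M} {𝒱 : ι → Submodule k V}
    [Decomposition 𝒩] [Decomposition ℳ] [Decomposition 𝒱] {K : Submodule k (N ⊗[k] M)}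
    (hK : SetLike.IsHomogeneous (tensorGrading 𝒩 ℳ) K) {p : ι} (φ : K →ₗ[k] V)
    (hφ : ∀ n (z : K), (z : N ⊗[k] M) ∈ tensorGrading 𝒩 ℳ n → φ z ∈ 𝒱 (n + p)) :
    ∃ h : M →ₗ[k] N →ₗ[k] V, (∀ m j y x, y ∈ ℳ m → x ∈ 𝒩 j → h y x ∈ 𝒱 (j + (m + p))) ∧
      lift h.flip ∘ₗ K.subtype = φ := by
  obtain ⟨f, hf⟩ := LinearMap.exists_extend φ
  set F := homogeneousPart (tensorGrading 𝒩 ℳ) 𝒱 p f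
  refine ⟨(curry F).flip, fun m j y x hy hx => ?_, ?_⟩
  · rw [LinearMap.flip_apply, curry_apply,
      homogeneousPart_apply_of_mem (tmul_mem_tensorGrading hx hy), ← add_assoc]
    exact gradedProj_mem 𝒱 _ _
  · have hF : lift (curry F).flip.flip = F := by
      rw [LinearMap.flip_flip]
      exact TensorProduct.ext' fun _ _ => rfl
    rw [hF, ← hf]
    refine LinearMap.ext fun z =>
      homogeneousPart_apply_of_isHomogeneous hK (fun n x hx hxn => ?_) z.2
    have hfx : f x = φ ⟨x, hx⟩ := LinearMap.congr_fun hf ⟨x, hx⟩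
    exact hfx ▸ hφ n ⟨x, hx⟩ hxn

section

variable {k : Type} [Field k]
  {C : Type} [AddCommGroup C] [Module k C] [Coalgebra k C]
  {N : Type} [AddCommGroup N] [Module k N]
  {M : Type} [AddCommGroup M] [Module k M]
  {V : Type} [AddCommGroup V] [Module k V]

theorem cotensor_hom_iso_cohom_general
    (𝒞 : ℤ → Submodule k C) [DirectSum.Decomposition 𝒞]
    -- `N` is a graded right `C`-comodule:
    (ρN : N →ₗ[k] N ⊗[k] C)
    (𝒩 : ℤ → Submodule k N) [DirectSum.Decomposition 𝒩]
    (ρN_graded : ∀ n : ℤ, ∀ z ∈ 𝒩 n, ∃ (ι : Type) (s : Finset ι)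
        (x₀ : ι → N) (x₁ : ι → C) (degx : ι → ℤ),
        (∀ t ∈ s, x₀ t ∈ 𝒩 (degx t) ∧ x₁ t ∈ 𝒞 (n - degx t)) ∧
        ρN z = ∑ t ∈ s, x₀ t ⊗ₜ[k] x₁ t)
    -- `M` is a graded left `C`-comodule:
    (ρM : M →ₗ[k] C ⊗[k] M)
    (ℳ : ℤ → Submodule k M) [DirectSum.Decomposition ℳ]
    (ρM_graded : ∀ n : ℤ, ∀ z ∈ ℳ n, ∃ (ι : Type) (s : Finset ι)
        (y₁ : ι → C) (y₀ : ι → M) (degy : ι → ℤ),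
        (∀ t ∈ s, y₁ t ∈ 𝒞 (degy t) ∧ y₀ t ∈ ℳ (n - degy t)) ∧
        ρM z = ∑ t ∈ s, y₁ t ⊗ₜ[k] y₀ t)
    -- `V` is a graded vector space:
    (𝒱 : ℤ → Submodule k V) [DirectSum.Decomposition 𝒱] :
    -- the degree-`p` homogeneous part of `Hom_k(M, Hom_k(N, V))`:
    let SHom : ℤ → Set (M →ₗ[k] (N →ₗ[k] V)) := fun p =>
      {h | ∀ (m j : ℤ) (y : M) (x : N), y ∈ ℳ m → x ∈ 𝒩 j →
        h y x ∈ 𝒱 (j + (m + p))}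
    -- the induced grading on `N ⊗ M`:
    let grT : ℤ → Submodule k (N ⊗[k] M) := fun n =>
      Submodule.span k {z : N ⊗[k] M |
        ∃ a : ℤ, ∃ x ∈ 𝒩 a, ∃ y ∈ ℳ (n - a), z = x ⊗ₜ[k] y}
    -- the degree-`p` homogeneous part of `Hom_k(N □_C M, V)`:
    let SK : ℤ → Set (↥(cotensor (k := k) ρN ρM) →ₗ[k] V) := fun p =>
      {φ | ∀ (n : ℤ) (z : ↥(cotensor (k := k) ρN ρM)),
        (z : N ⊗[k] M) ∈ grT n → φ z ∈ 𝒱 (n + p)}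
    -- the natural map `Hom_k(M, Hom_k(N, V)) → Hom_k(N □_C M, V)`:
    let Θ : (M →ₗ[k] (N →ₗ[k] V)) → (↥(cotensor (k := k) ρN ρM) →ₗ[k] V) :=
      fun h => (TensorProduct.lift h.flip).comp (cotensor (k := k) ρN ρM).subtype
    -- `Θ` preserves degrees, is degreewise surjective, and its kernel is exactly
    -- the subspace of relations defining `Cohom_C(M, Hom_k(N, V))`; hence it induces
    -- an isomorphism of graded vector spaces
    -- `Cohom_C(M, Hom_k(N, V)) ≅ Hom_k(N □_C M, V)`:
    (∀ (p : ℤ) (h : M →ₗ[k] (N →ₗ[k] V)), h ∈ SHom p → Θ h ∈ SK p) ∧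
    (∀ (p : ℤ) (φ : ↥(cotensor (k := k) ρN ρM) →ₗ[k] V), φ ∈ SK p →
      ∃ h ∈ SHom p, Θ h = φ) ∧
    (∀ (p : ℤ) (h : M →ₗ[k] (N →ₗ[k] V)), h ∈ SHom p →
      (Θ h = 0 ↔ h ∈ LinearMap.range (cohomRelations (V := V) ρN ρM))) := by
  intro SHom grT SK Θ
  have hρN : ∀ n, 𝒩 n ≤ (tensorGrading 𝒩 𝒞 n).comap ρN := fun n z hz => by
    obtain ⟨_, _, _, _, _, hdeg, hρ⟩ := ρN_graded n z hz
    exact Submodule.mem_comap.mpr (hρ ▸ sum_tmul_mem_tensorGrading hdeg)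
  have hρM : ∀ n, ℳ n ≤ (tensorGrading 𝒞 ℳ n).comap ρM := fun n z hz => by
    obtain ⟨_, _, _, _, _, hdeg, hρ⟩ := ρM_graded n z hz
    exact Submodule.mem_comap.mpr (hρ ▸ sum_tmul_mem_tensorGrading hdeg)
  have hK : SetLike.IsHomogeneous (tensorGrading 𝒩 ℳ) (cotensor ρN ρM) :=
    isHomogeneous_ker _ (iSupIndep_tensorGrading 𝒩 (tensorGrading 𝒞 ℳ))
      (tensorGrading_le_comap_cotensorDiff hρN hρM)
  exact ⟨fun p h hh n z hz => lift_flip_mem_tensorGrading hh hz,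
    fun p φ hφ => exists_homogeneous_lift_flip_comp_subtype_eq hK φ hφ,
    fun p h _ => lift_flip_comp_subtype_cotensor_eq_zero_iff ρN ρM h⟩

/-- For a graded coalgebra `C`, a graded right `C`-comodule `N`,
a graded left `C`-comodule `M` and a graded vector space `V`, there is a natural
isomorphism of graded vector spaces
`Hom_k(N □_C M, V) ≅ Cohom_C(M, Hom_k(N, V))`,
where `Hom_k(N, V)` carries its natural graded left `C`-contramodule structure.
Here `Cohom_C(M, P)` is presented as the cokernel of `cohomRelations`, and the
isomorphism is induced (degreewise) by `h ↦ (lift h.flip)|_{N □_C M}`. -/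
theorem cotensor_hom_iso_cohom
    (𝒞 : ℤ → Submodule k C) [DirectSum.Decomposition 𝒞]
    (hcomul_graded : ∀ n : ℤ, ∀ c ∈ 𝒞 n, ∃ (ι : Type) (s : Finset ι)
        (x y : ι → C) (degx : ι → ℤ),
        (∀ t ∈ s, x t ∈ 𝒞 (degx t) ∧ y t ∈ 𝒞 (n - degx t)) ∧
        Coalgebra.comul (R := k) c = ∑ t ∈ s, x t ⊗ₜ[k] y t)
    (hcounit_graded : ∀ n : ℤ, n ≠ 0 → ∀ c ∈ 𝒞 n, Coalgebra.counit (R := k) c = 0)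
    -- `N` is a graded right `C`-comodule:
    (ρN : N →ₗ[k] N ⊗[k] C)
    (ρN_coassoc : (TensorProduct.assoc k N C C).toLinearMap.comp
        ((TensorProduct.map ρN LinearMap.id).comp ρN)
      = (TensorProduct.map LinearMap.id (Coalgebra.comul (R := k))).comp ρN)
    (ρN_counit : (TensorProduct.rid k N).toLinearMap.comp
        ((TensorProduct.map LinearMap.id (Coalgebra.counit (R := k))).comp ρN)
      = LinearMap.id)
    (𝒩 : ℤ → Submodule k N) [DirectSum.Decomposition 𝒩]
    (ρN_graded : ∀ n : ℤ, ∀ z ∈ 𝒩 n, ∃ (ι : Type) (s : Finset ι)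
        (x₀ : ι → N) (x₁ : ι → C) (degx : ι → ℤ),
        (∀ t ∈ s, x₀ t ∈ 𝒩 (degx t) ∧ x₁ t ∈ 𝒞 (n - degx t)) ∧
        ρN z = ∑ t ∈ s, x₀ t ⊗ₜ[k] x₁ t)
    -- `M` is a graded left `C`-comodule:
    (ρM : M →ₗ[k] C ⊗[k] M)
    (ρM_coassoc : (TensorProduct.map (Coalgebra.comul (R := k)) LinearMap.id).comp ρM
      = ((TensorProduct.assoc k C C M).symm.toLinearMap.comp
          ((TensorProduct.map LinearMap.id ρM).comp ρM)))
    (ρM_counit : (TensorProduct.lid k M).toLinearMap.comp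
        ((TensorProduct.map (Coalgebra.counit (R := k)) LinearMap.id).comp ρM)
      = LinearMap.id)
    (ℳ : ℤ → Submodule k M) [DirectSum.Decomposition ℳ]
    (ρM_graded : ∀ n : ℤ, ∀ z ∈ ℳ n, ∃ (ι : Type) (s : Finset ι)
        (y₁ : ι → C) (y₀ : ι → M) (degy : ι → ℤ),
        (∀ t ∈ s, y₁ t ∈ 𝒞 (degy t) ∧ y₀ t ∈ ℳ (n - degy t)) ∧
        ρM z = ∑ t ∈ s, y₁ t ⊗ₜ[k] y₀ t)
    -- `V` is a graded vector space:
    (𝒱 : ℤ → Submodule k V) [DirectSum.Decomposition 𝒱] :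
    -- the degree-`p` homogeneous part of `Hom_k(M, Hom_k(N, V))`:
    let SHom : ℤ → Set (M →ₗ[k] (N →ₗ[k] V)) := fun p =>
      {h | ∀ (m j : ℤ) (y : M) (x : N), y ∈ ℳ m → x ∈ 𝒩 j →
        h y x ∈ 𝒱 (j + (m + p))}
    -- the induced grading on `N ⊗ M`:
    let grT : ℤ → Submodule k (N ⊗[k] M) := fun n =>
      Submodule.span k {z : N ⊗[k] M |
        ∃ a : ℤ, ∃ x ∈ 𝒩 a, ∃ y ∈ ℳ (n - a), z = x ⊗ₜ[k] y}
    -- the degree-`p` homogeneous part of `Hom_k(N □_C M, V)`: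
    let SK : ℤ → Set (↥(cotensor (k := k) ρN ρM) →ₗ[k] V) := fun p =>
      {φ | ∀ (n : ℤ) (z : ↥(cotensor (k := k) ρN ρM)),
        (z : N ⊗[k] M) ∈ grT n → φ z ∈ 𝒱 (n + p)}
    -- the natural map `Hom_k(M, Hom_k(N, V)) → Hom_k(N □_C M, V)`:
    let Θ : (M →ₗ[k] (N →ₗ[k] V)) → (↥(cotensor (k := k) ρN ρM) →ₗ[k] V) :=
      fun h => (TensorProduct.lift h.flip).comp (cotensor (k := k) ρN ρM).subtype
    -- `Θ` preserves degrees, is degreewise surjective, and its kernel is exactly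
    -- the subspace of relations defining `Cohom_C(M, Hom_k(N, V))`; hence it induces
    -- an isomorphism of graded vector spaces
    -- `Cohom_C(M, Hom_k(N, V)) ≅ Hom_k(N □_C M, V)`:
    (∀ (p : ℤ) (h : M →ₗ[k] (N →ₗ[k] V)), h ∈ SHom p → Θ h ∈ SK p) ∧
    (∀ (p : ℤ) (φ : ↥(cotensor (k := k) ρN ρM) →ₗ[k] V), φ ∈ SK p →
      ∃ h ∈ SHom p, Θ h = φ) ∧
    (∀ (p : ℤ) (h : M →ₗ[k] (N →ₗ[k] V)), h ∈ SHom p →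
      (Θ h = 0 ↔ h ∈ LinearMap.range (cohomRelations (V := V) ρN ρM))) :=
  cotensor_hom_iso_cohom_general 𝒞 ρN 𝒩 ρN_graded ρM ℳ ρM_graded 𝒱

end
end
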